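/- Let (M, ḡ) be a smooth closed Riemannian manifold of dimension n ≥ 3 whose scalar curvature Scal_ḡ is a positive constant, and let f ∈ L^p(M), p > n, be a nonnegative function with f ≢ 0. Let ū ∈ W^{2,p}(M) be the (unique, positive by the strong maximum principle) solution of the linear equation −(4(n−1)/(n−2)) Δ_ḡ ū + Scal_ḡ ū = f. Then φ̄₋ := (max ū)^{−(N+1)/(N+2)} ū is a subsolution and φ̄₊ := (min ū)^{−(N+1)/(N+2)} ū is a supersolution of the equation −(4(n−1)/(n−2)) Δ_ḡ φ̄ + Scal_ḡ φ̄ = f φ̄^{−N−1}; that is, −(4(n−1)/(n−2)) Δ_ḡ φ̄₋ + Scal_ḡ φ̄₋ ≤ f (φ̄₋)^{−N−1} and −(4(n−1)/(n−2)) Δ_ḡ φ̄₊ + Scal_ḡ φ̄₊ ≥ f (φ̄₊)^{−N−1} on M. -/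
import Mathlib


/-!
Abstract framework for the conformal method on a smooth closed Riemannian
manifold `(M, g)` of dimension `n ≥ 3`.  The type `M` is the set of points of
the manifold (compactness of the closed manifold is recorded by a
`CompactSpace` instance), `V` plays the role of the space of values of
`1`-forms and `T` that of symmetric `2`-tensors.  All analytic objects
attached to the Riemannian metric `g` (scalar curvature, Laplace–Beltrami
operator, conformal Killing operator, pointwise norms and inner products,
integration against the volume measure, Sobolev classes, the Yamabe
invariant, ...) are bundled abstractly in the structure `ConformalData`.
-/

noncomputable section

open Set

/-- The critical exponent `N = 2n/(n-2)`. -/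
def Nexp (n : ℕ) : ℝ := 2 * (n : ℝ) / ((n : ℝ) - 2)

/-- All the data attached to a (smooth, closed) Riemannian manifold `(M, g)`
of dimension `n` with a `W^{2,p}` metric that enter the conformal method. -/
structure ConformalData (M V T : Type*) [AddCommGroup V] [Module ℝ V]
    [AddCommGroup T] [Module ℝ T] where
  /-- the dimension of `M` -/
  n : ℕ
  /-- the Sobolev exponent for the regularity of the metric -/
  p : ℝ
  /-- the statement that the metric `g` belongs to `W^{2,p}` -/
  metricW2p : Prop
  /-- the scalar curvature `Scal_g` -/
  scal : M → ℝ
  /-- `scalConf ψ` is the scalar curvature of the conformal metric `ψ^{N-2} g` -/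
  scalConf : (M → ℝ) → M → ℝ
  /-- the Laplace–Beltrami operator `Δ_g u = div_g (∇ u)` -/
  lap : (M → ℝ) → M → ℝ
  /-- the conformal Killing operator
  `(𝕃W)_{ij} = ∇_i W_j + ∇_j W_i − (2/n)(∇^k W_k) g_{ij}` -/
  CK : (M → V) → M → T
  /-- the operator `Δ_L W := div_g (𝕃 W)` -/
  lapL : (M → V) → M → V
  /-- the differential `d` on functions -/
  diff : (M → ℝ) → M → V
  /-- the pointwise squared norm `|·|²_g` on symmetric `2`-tensors -/
  tnormSq : M → T → ℝ
  /-- the pointwise norm `|·|_g` on `1`-forms -/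
  vnorm : M → V → ℝ
  /-- the pointwise inner product `⟨·,·⟩_g` on `1`-forms -/
  vpair : M → V → V → ℝ
  /-- the pointwise inner product `⟨·,·⟩_g` on symmetric `2`-tensors -/
  tpair : M → T → T → ℝ
  /-- integration `u ↦ ∫_M u dv_g` against the Riemannian volume measure -/
  integral : (M → ℝ) → ℝ
  /-- the Yamabe invariant
  `Y(g) = inf_{φ ≠ 0} ∫_M ((4(n-1)/(n-2))|dφ|² + Scal_g φ²) dv_g / (∫_M φ^N dv_g)^{2/N}` -/
  yamabe : ℝ
  /-- `isTT σ` ↔ `σ` is transverse–traceless: `tr_g σ ≡ 0` and `div_g σ ≡ 0` -/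
  isTT : (M → T) → Prop
  /-- membership in `L^p(M, ℝ)` -/
  Lp_fun : (M → ℝ) → Prop
  /-- membership in `W^{1,p}(M, ℝ)` -/
  W1p_fun : (M → ℝ) → Prop
  /-- membership in `W^{2,p}(M, ℝ)` -/
  W2p_fun : (M → ℝ) → Prop
  /-- membership in `W^{2,p}(M, T*M)` -/
  W2p_form : (M → V) → Prop
  /-- membership in `W^{1,p}(M, S²M)` -/
  W1p_tensor : (M → T) → Prop
  /-- `FredholmIdx0 A` ↔ the operator `A`, as a map `W^{2,p} → L^p`,
  is Fredholm of index `0` -/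
  FredholmIdx0 : ((M → ℝ) → M → ℝ) → Prop
  /-- the Laplacian is additive -/
  lap_add : ∀ u v, lap (u + v) = lap u + lap v
  /-- the Laplacian is homogeneous -/
  lap_smul : ∀ (c : ℝ) (u), lap (c • u) = c • lap u
  /-- the conformal Killing operator is homogeneous -/
  CK_smul : ∀ (c : ℝ) (W), CK (c • W) = fun x => c • CK W x
  /-- `Δ_L` is homogeneous -/
  lapL_smul : ∀ (c : ℝ) (W), lapL (c • W) = fun x => c • lapL W x
  /-- the differential is homogeneous -/
  diff_smul : ∀ (c : ℝ) (u), diff (c • u) = fun x => c • diff u x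
  /-- the squared norm is `2`-homogeneous -/
  tnormSq_smul : ∀ (x : M) (c : ℝ) (t : T), tnormSq x (c • t) = c ^ 2 * tnormSq x t

variable {M V T : Type*} [AddCommGroup V] [Module ℝ V] [AddCommGroup T] [Module ℝ T]

/-- The Lichnerowicz equation
`−(4(n−1)/(n−2)) Δ_g φ + Scal_g φ = −((n−1)/n) τ² φ^{N−1} + |σ + 𝕃W|²_g φ^{−N−1}`. -/
def Lichnerowicz (S : ConformalData M V T) (τ : M → ℝ) (σ : M → T)
    (φ : M → ℝ) (W : M → V) : Prop :=
  ∀ x, -(4 * ((S.n : ℝ) - 1) / ((S.n : ℝ) - 2)) * S.lap φ x + S.scal x * φ x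
      = -(((S.n : ℝ) - 1) / (S.n : ℝ)) * τ x ^ 2 * φ x ^ (Nexp S.n - 1)
        + S.tnormSq x (σ x + S.CK W x) * φ x ^ (-(Nexp S.n) - 1)

/-- The vector equation `Δ_L W = ((n−1)/n) φ^N dτ`. -/
def VectorEq (S : ConformalData M V T) (τ φ : M → ℝ) (W : M → V) : Prop :=
  ∀ x, S.lapL W x = ((((S.n : ℝ) - 1) / (S.n : ℝ)) * φ x ^ Nexp S.n) • S.diff τ x

/-- The Lichnerowicz equation with `τ ≡ 0` and `W ≡ 0`:
`−(4(n−1)/(n−2)) Δ_g φ + Scal_g φ = |σ|²_g φ^{−N−1}`. -/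
def LichnerowiczZero (S : ConformalData M V T) (σ : M → T) (φ : M → ℝ) : Prop :=
  ∀ x, -(4 * ((S.n : ℝ) - 1) / ((S.n : ℝ) - 2)) * S.lap φ x + S.scal x * φ x
      = S.tnormSq x (σ x) * φ x ^ (-(Nexp S.n) - 1)

/-- The `μ`-deformed Lichnerowicz equation
`−(4(n−1)/(n−2)) Δ_g φ + Scal_g φ = −((n−1)/n) τ² μ² φ^{N−1} + |σ + 𝕃W|²_g φ^{−N−1}`. -/
def DeformedLich (S : ConformalData M V T) (μ : ℝ) (τ : M → ℝ) (σ : M → T)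
    (φ : M → ℝ) (W : M → V) : Prop :=
  ∀ x, -(4 * ((S.n : ℝ) - 1) / ((S.n : ℝ) - 2)) * S.lap φ x + S.scal x * φ x
      = -(((S.n : ℝ) - 1) / (S.n : ℝ)) * τ x ^ 2 * μ ^ 2 * φ x ^ (Nexp S.n - 1)
        + S.tnormSq x (σ x + S.CK W x) * φ x ^ (-(Nexp S.n) - 1)

/-- The `μ`-deformed vector equation `Δ_L W = ((n−1)/n) φ^N μ dτ`. -/
def DeformedVector (S : ConformalData M V T) (μ : ℝ) (τ φ : M → ℝ) (W : M → V) : Prop :=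
  ∀ x, S.lapL W x = ((((S.n : ℝ) - 1) / (S.n : ℝ)) * φ x ^ Nexp S.n * μ) • S.diff τ x

/-- `(M, g)` admits no nonzero conformal Killing vector field, i.e. `𝕃W ≡ 0`
forces `W ≡ 0`. -/
def NoConformalKilling (S : ConformalData M V T) : Prop :=
  ∀ W : M → V, (∀ x, S.CK W x = 0) → W = 0

/-- sub- and super-solutions in the proof of Claim
`clLichneroLimit`.  Let `(M, ḡ)` be a smooth closed Riemannian manifold of
dimension `n ≥ 3` whose scalar curvature is a positive constant, let
`f ∈ L^p`, `p > n`, be nonnegative with `f ≢ 0`, and let `ū ∈ W^{2,p}` be the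
positive solution of `−(4(n−1)/(n−2)) Δ_ḡ ū + Scal_ḡ ū = f`.  Then
`φ̄₋ := (max ū)^{−(N+1)/(N+2)} ū` is a subsolution and
`φ̄₊ := (min ū)^{−(N+1)/(N+2)} ū` is a supersolution of
`−(4(n−1)/(n−2)) Δ_ḡ φ̄ + Scal_ḡ φ̄ = f φ̄^{−N−1}`.  (Here `max ū` and
`min ū` are realised as `sSup`/`sInf` of the range of the continuous function
`ū` on the compact manifold `M`.) -/
theorem sub_and_super_solutions
    {M V T : Type*} [TopologicalSpace M] [CompactSpace M] [Nonempty M]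
    [AddCommGroup V] [Module ℝ V] [AddCommGroup T] [Module ℝ T]
    (S : ConformalData M V T)
    (hn : 3 ≤ S.n) (hp : (S.n : ℝ) < S.p)
    (c : ℝ) (hc : 0 < c) (hscal : ∀ x, S.scal x = c)
    (f : M → ℝ) (hf : S.Lp_fun f) (hf0 : ∀ x, 0 ≤ f x) (hfne : f ≠ 0)
    (u : M → ℝ) (hu : S.W2p_fun u) (huc : Continuous u) (hupos : ∀ x, 0 < u x)
    (hueq : ∀ x, -(4 * ((S.n : ℝ) - 1) / ((S.n : ℝ) - 2)) * S.lap u x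
        + S.scal x * u x = f x) :
    (∀ x, -(4 * ((S.n : ℝ) - 1) / ((S.n : ℝ) - 2))
          * S.lap (fun y => (sSup (Set.range u)) ^ (-((Nexp S.n + 1) / (Nexp S.n + 2))) * u y) x
        + S.scal x * ((sSup (Set.range u)) ^ (-((Nexp S.n + 1) / (Nexp S.n + 2))) * u x)
      ≤ f x * ((sSup (Set.range u)) ^ (-((Nexp S.n + 1) / (Nexp S.n + 2))) * u x)
          ^ (-(Nexp S.n) - 1)) ∧
    (∀ x, -(4 * ((S.n : ℝ) - 1) / ((S.n : ℝ) - 2))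
          * S.lap (fun y => (sInf (Set.range u)) ^ (-((Nexp S.n + 1) / (Nexp S.n + 2))) * u y) x
        + S.scal x * ((sInf (Set.range u)) ^ (-((Nexp S.n + 1) / (Nexp S.n + 2))) * u x)
      ≥ f x * ((sInf (Set.range u)) ^ (-((Nexp S.n + 1) / (Nexp S.n + 2))) * u x)
          ^ (-(Nexp S.n) - 1)) := by
  classical
  have hn3 : (3:ℝ) ≤ (S.n : ℝ) := by exact_mod_cast hn
  have hn2 : (0:ℝ) < (S.n : ℝ) - 2 := by linarith
  have hNpos : 0 < Nexp S.n := by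
    have : (0:ℝ) < 2 * (S.n : ℝ) := by linarith
    exact div_pos this hn2
  set Nn := Nexp S.n with hNn
  have hN2 : (0:ℝ) < Nn + 2 := by linarith
  have hN2' : Nn + 2 ≠ 0 := ne_of_gt hN2
  set α : ℝ := (Nn + 1) / (Nn + 2) with hα
  set e : ℝ := -Nn - 1 with he
  have hele : e ≤ 0 := by simp [he]; linarith
  have hbdA : BddAbove (Set.range u) := (isCompact_range huc).bddAbove
  have hbdB : BddBelow (Set.range u) := (isCompact_range huc).bddBelow
  set a := sSup (Set.range u) with ha
  set b := sInf (Set.range u) with hb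
  have hxa : ∀ x, u x ≤ a := fun x => le_csSup hbdA ⟨x, rfl⟩
  have hbx : ∀ x, b ≤ u x := fun x => csInf_le hbdB ⟨x, rfl⟩
  obtain ⟨x0⟩ := (inferInstance : Nonempty M)
  have hapos : 0 < a := lt_of_lt_of_le (hupos x0) (hxa x0)
  have hbpos : 0 < b := by
    obtain ⟨x1, hx1⟩ := (isCompact_range huc).sInf_mem (Set.range_nonempty u)
    rw [← hb] at hx1
    rw [← hx1]; exact hupos x1
  -- generic linear computation
  have key : ∀ (l : ℝ) (x : M),
      -(4 * ((S.n : ℝ) - 1) / ((S.n : ℝ) - 2)) * S.lap (fun y => l * u y) x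
        + S.scal x * (l * u x) = l * f x := by
    intro l x
    have h1 : (fun y => l * u y) = l • u := by
      funext y; simp [smul_eq_mul]
    rw [h1, S.lap_smul]
    have := hueq x
    simp only [Pi.smul_apply, smul_eq_mul]
    linear_combination l * hueq x
  -- exponent computation
  have hexp : (1 - α) * e = -α := by
    rw [hα, he]; field_simp; ring
  have hmm : ∀ m : ℝ, 0 < m → m ^ (-α) * m = m ^ (1 - α) := by
    intro m hm
    calc m ^ (-α) * m = m ^ (-α) * m ^ (1:ℝ) := by rw [Real.rpow_one]
      _ = m ^ (-α + 1) := (Real.rpow_add hm _ _).symm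
      _ = m ^ (1 - α) := by ring_nf
  constructor
  · intro x
    rw [key]
    have hl : (0:ℝ) < a ^ (-α) := Real.rpow_pos_of_pos hapos _
    have hstep : a ^ (-α) ≤ (a ^ (-α) * u x) ^ e := by
      have h1 : a ^ (-α) * u x ≤ a ^ (1 - α) := by
        calc a ^ (-α) * u x ≤ a ^ (-α) * a :=
              mul_le_mul_of_nonneg_left (hxa x) hl.le
          _ = a ^ (1 - α) := hmm a hapos
      have h2 : (a ^ (1 - α)) ^ e ≤ (a ^ (-α) * u x) ^ e :=
        Real.rpow_le_rpow_of_nonpos (mul_pos hl (hupos x)) h1 hele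
      calc a ^ (-α) = a ^ ((1 - α) * e) := by rw [hexp]
        _ = (a ^ (1 - α)) ^ e := Real.rpow_mul hapos.le _ _
        _ ≤ _ := h2
    calc a ^ (-α) * f x = f x * a ^ (-α) := mul_comm _ _
      _ ≤ f x * (a ^ (-α) * u x) ^ e :=
          mul_le_mul_of_nonneg_left hstep (hf0 x)
      _ = f x * (a ^ (-α) * u x) ^ (-Nn - 1) := rfl
  · intro x
    rw [key]
    have hl : (0:ℝ) < b ^ (-α) := Real.rpow_pos_of_pos hbpos _
    have hstep : (b ^ (-α) * u x) ^ e ≤ b ^ (-α) := by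
      have h1 : b ^ (1 - α) ≤ b ^ (-α) * u x := by
        calc b ^ (1 - α) = b ^ (-α) * b := (hmm b hbpos).symm
          _ ≤ b ^ (-α) * u x :=
              mul_le_mul_of_nonneg_left (hbx x) hl.le
      have h2 : (b ^ (-α) * u x) ^ e ≤ (b ^ (1 - α)) ^ e :=
        Real.rpow_le_rpow_of_nonpos (Real.rpow_pos_of_pos hbpos _) h1 hele
      calc (b ^ (-α) * u x) ^ e ≤ (b ^ (1 - α)) ^ e := h2
        _ = b ^ ((1 - α) * e) := (Real.rpow_mul hbpos.le _ _).symm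
        _ = b ^ (-α) := by rw [hexp]
    calc f x * (b ^ (-α) * u x) ^ (-Nn - 1)
        = f x * (b ^ (-α) * u x) ^ e := rfl
      _ ≤ f x * b ^ (-α) := mul_le_mul_of_nonneg_left hstep (hf0 x)
      _ = b ^ (-α) * f x := mul_comm _ _
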